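/- The Thue–Morse sequence is at most rank-two: defining M_{0,1} = M_{0,2} = 0, and for n ≥ 0, M_{n+1,1} = M_{n,1} 1 M_{n,2}, M_{n+1,2} = M_{n,2} 1 M_{n,1} if n is odd, and M_{n+1,1} = M_{n,1} 11 M_{n,2}, M_{n+1,2} = M_{n,2} M_{n,1} if n is even, then M_{i,1} is a prefix of the Thue–Morse sequence for every i. -/

import Mathlib

/-- A block of `a` ones. -/
def ones (a : ℕ) : List Bool := List.replicate a true

/-- Words over {0,1} that begin and end with 0 (false = 0, true = 1). -/
def InF (v : List Bool) : Prop := v.head? = some false ∧ v.getLast? = some false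

/-- `w` is a prefix of the infinite word `V`. -/
def PrefixOf (w : List Bool) (V : ℕ → Bool) : Prop :=
  ∀ i, i < w.length → w.getD i false = V i

/-- Finite stages `v 1^{a 0} v 1^{a 1} v ⋯ v`. -/
def stage (v : List Bool) (a : ℕ → ℕ) : ℕ → List Bool
  | 0 => v
  | n + 1 => stage v a n ++ ones (a n) ++ v

/-- The infinite word `V` is built from `v`: `V = v 1^{a₁} v 1^{a₂} v ⋯`. -/
def BuiltFrom (V : ℕ → Bool) (v : List Bool) : Prop :=
  ∃ a : ℕ → ℕ, ∀ n, PrefixOf (stage v a n) V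

/-- A finite word `w` is built from `v`: `w = v 1^{a₁} v ⋯ v 1^{a_k} v`, `k ≥ 1`. -/
def FBuiltFrom (w v : List Bool) : Prop :=
  ∃ a : List ℕ, a ≠ [] ∧ w = v ++ (a.map fun n => ones n ++ v).flatten

/-- `A_V`, the set of words in `𝓕` from which `V` is built. -/
def AV (V : ℕ → Bool) : Set (List Bool) := {v | InF v ∧ BuiltFrom V v}

/-- `w` occurs in the infinite word `V` at position `k`. -/
def OccursAt (w : List Bool) (V : ℕ → Bool) (k : ℕ) : Prop :=
  ∀ i, i < w.length → w.getD i false = V (k + i)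

/-- `w` is a factor (contiguous subword) of the infinite word `V`. -/
def FactorOfN (w : List Bool) (V : ℕ → Bool) : Prop := ∃ k, OccursAt w V k

/-- `w` occurs in the bi-infinite word `x` at position `k`. -/
def OccursAtZ (w : List Bool) (x : ℤ → Bool) (k : ℤ) : Prop :=
  ∀ i, i < w.length → w.getD i false = x (k + (i : ℤ))

/-- `w` is a factor of the bi-infinite word `x`. -/
def FactorOfZ (w : List Bool) (x : ℤ → Bool) : Prop := ∃ k, OccursAtZ w x k

/-- The subshift associated to an infinite word `V`. -/
def Subshift (V : ℕ → Bool) : Set (ℤ → Bool) :=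
  {x | ∀ w, FactorOfZ w x → FactorOfN w V}

/-- Thue–Morse words: `M 0 = 0`, `M (n+1) = M n ++ complement (M n)`. -/
def M : ℕ → List Bool
  | 0 => [false]
  | n + 1 => M n ++ (M n).map (fun b => !b)

/-- The Thue–Morse sequence: parity of the number of 1's in binary expansion. -/
def tm (n : ℕ) : Bool := decide (((Nat.digits 2 n).count 1) % 2 = 1)

/-- Rank-two towers for the Thue–Morse sequence. -/
def M2 : ℕ → List Bool × List Bool
  | 0 => ([false], [false])
  | n + 1 =>
    if n % 2 = 1 then ((M2 n).1 ++ [true] ++ (M2 n).2, (M2 n).2 ++ [true] ++ (M2 n).1)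
    else ((M2 n).1 ++ [true, true] ++ (M2 n).2, (M2 n).2 ++ (M2 n).1)

/-!
Writing `¬w` for the complement of `w`, we have `M (n+1) = M n ++ ¬(M n)`. With
`(a, b) = M2 n`, the identities `M (n+1) = a 1` and `¬M (n+1) = 1 b` for even `n`, and
`M (n+1) = a` and `¬M (n+1) = 1 b 1` for odd `n`, propagate from each `n` to `n + 1`,
starting from `M 1 = 01`. So `(M2 n).1` is a prefix of `M (n+1)`, which is a prefix of `tm`
because `tm (2^n + j) = ¬tm j` for `j < 2^n`.
-/

lemma tm_two_mul (n : ℕ) : tm (2 * n) = tm n := by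
  rcases Nat.eq_zero_or_pos n with rfl | hn
  · rfl
  · simp [tm, Nat.digits_def' (b := 2) (by norm_num) (by omega : 0 < 2 * n)]

lemma tm_two_mul_add_one (n : ℕ) : tm (2 * n + 1) = !tm n := by
  simp only [tm, Nat.digits_def' (b := 2) (by norm_num) (by omega : 0 < 2 * n + 1)]
  simp [show (2 * n + 1) / 2 = n by omega, Nat.add_mod, Bool.eq_not_iff]
  omega

lemma tm_two_pow_add {n j : ℕ} (hj : j < 2 ^ n) : tm (2 ^ n + j) = !tm j := by
  induction n generalizing j with
  | zero =>
    obtain rfl : j = 0 := by simpa using hj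
    exact tm_two_mul_add_one 0
  | succ n ih =>
    rw [pow_succ] at hj ⊢
    obtain ⟨k, rfl | rfl⟩ := Nat.even_or_odd' j
    · rw [show 2 ^ n * 2 + 2 * k = 2 * (2 ^ n + k) by ring, tm_two_mul, tm_two_mul,
        ih (by omega)]
    · rw [show 2 ^ n * 2 + (2 * k + 1) = 2 * (2 ^ n + k) + 1 by ring, tm_two_mul_add_one,
        tm_two_mul_add_one, ih (by omega)]

lemma prefixOf_append {u v : List Bool} {V : ℕ → Bool} :
    PrefixOf (u ++ v) V ↔ PrefixOf u V ∧ OccursAt v V u.length := by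
  constructor
  · intro h
    refine ⟨fun i hi => ?_, fun i hi => ?_⟩
    · rw [← h i (by simp; omega), List.getD_append _ _ _ _ hi]
    · rw [← h _ (by simp; omega), List.getD_append_right _ _ _ _ (by omega),
        Nat.add_sub_cancel_left]
  · rintro ⟨hu, hv⟩ i hi
    rcases lt_or_ge i u.length with h | h
    · rw [List.getD_append _ _ _ _ h, hu i h]
    · rw [List.getD_append_right _ _ _ _ h, hv _ (by simp at hi; omega),
        Nat.add_sub_cancel' h]

lemma PrefixOf.of_prefix {u w : List Bool} {V : ℕ → Bool} (hw : PrefixOf w V) (h : u <+: w) :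
    PrefixOf u V := by
  obtain ⟨t, rfl⟩ := h
  exact (prefixOf_append.mp hw).1

lemma M_succ (n : ℕ) : M (n + 1) = M n ++ (M n).map not := rfl

lemma length_M (n : ℕ) : (M n).length = 2 ^ n := by
  induction n with
  | zero => rfl
  | succ n ih => simp [M_succ, ih, pow_succ, mul_two]

lemma prefixOf_M_tm (n : ℕ) : PrefixOf (M n) tm := by
  induction n with
  | zero =>
    intro i hi
    obtain rfl : i = 0 := by simpa [M] using hi
    rfl
  | succ n ih =>
    refine prefixOf_append.mpr ⟨ih, fun j hj => ?_⟩
    rw [List.length_map, length_M] at hj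
    have hj' : j < (M n).length := by rwa [length_M]
    rw [length_M, tm_two_pow_add hj, ← ih j hj', List.getD_eq_getElem _ _ (by simpa using hj'),
      List.getD_eq_getElem _ _ hj', List.getElem_map]

lemma M2_succ_of_even {n : ℕ} (hn : n % 2 = 0) :
    M2 (n + 1) = ((M2 n).1 ++ [true, true] ++ (M2 n).2, (M2 n).2 ++ (M2 n).1) := by
  simp [M2, hn]

lemma M2_succ_of_odd {n : ℕ} (hn : n % 2 = 1) :
    M2 (n + 1) = ((M2 n).1 ++ [true] ++ (M2 n).2, (M2 n).2 ++ [true] ++ (M2 n).1) := by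
  simp [M2, hn]

lemma M_add_two_of_even {n : ℕ} (hn : n % 2 = 0) (h : M (n + 1) = (M2 n).1 ++ [true])
    (h' : (M (n + 1)).map not = true :: (M2 n).2) :
    M (n + 2) = (M2 (n + 1)).1 ∧ (M (n + 2)).map not = true :: ((M2 (n + 1)).2 ++ [true]) := by
  rw [M_succ, List.map_append, List.map_map, Bool.involutive_not.comp_self, List.map_id, h', h,
    M2_succ_of_even hn]
  simp

lemma M_add_two_of_odd {n : ℕ} (hn : n % 2 = 1) (h : M (n + 1) = (M2 n).1)
    (h' : (M (n + 1)).map not = true :: ((M2 n).2 ++ [true])) :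
    M (n + 2) = (M2 (n + 1)).1 ++ [true] ∧ (M (n + 2)).map not = true :: (M2 (n + 1)).2 := by
  rw [M_succ, List.map_append, List.map_map, Bool.involutive_not.comp_self, List.map_id, h', h,
    M2_succ_of_odd hn]
  simp

lemma M_two_mul_add_one (k : ℕ) :
    M (2 * k + 1) = (M2 (2 * k)).1 ++ [true] ∧
      (M (2 * k + 1)).map not = true :: (M2 (2 * k)).2 := by
  induction k with
  | zero => exact ⟨rfl, rfl⟩
  | succ k ih =>
    obtain ⟨h, h'⟩ := M_add_two_of_even (n := 2 * k) (by omega) ih.1 ih.2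
    exact M_add_two_of_odd (n := 2 * k + 1) (by omega) h h'

lemma M_two_mul_add_two (k : ℕ) :
    M (2 * k + 2) = (M2 (2 * k + 1)).1 ∧
      (M (2 * k + 2)).map not = true :: ((M2 (2 * k + 1)).2 ++ [true]) :=
  M_add_two_of_even (by omega) (M_two_mul_add_one k).1 (M_two_mul_add_one k).2

lemma M2_fst_prefix_M_succ (n : ℕ) : (M2 n).1 <+: M (n + 1) := by
  obtain ⟨k, rfl | rfl⟩ := Nat.even_or_odd' n
  · exact ⟨[true], (M_two_mul_add_one k).1.symm⟩
  · exact (M_two_mul_add_two k).1 ▸ List.prefix_refl _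

theorem stmt17 : ∀ i, PrefixOf (M2 i).1 tm :=
  fun i => (prefixOf_M_tm (i + 1)).of_prefix (M2_fst_prefix_M_succ i)
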